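/- Let G be a closed subgroup of the orthogonal group O(d), let z_1,…,z_n ∈ ℝ^d, and let Φ be the corresponding max filter bank. Suppose that Φ is injective on orbits (i.e., Φ(x) = Φ(y) implies [x] = [y]) and that Φ is locally lower Lipschitz at every x ∈ ℝ^d with ‖x‖ = 1. Then Φ is bilipschitz: there exist α, β > 0 such that α·d([x],[y]) ≤ ‖Φ(x) − Φ(y)‖ ≤ β·d([x],[y]) for all x, y ∈ ℝ^d. -/

import Mathlib

open scoped RealInnerProductSpace

noncomputable section

/-- `d × d` real matrices. -/
abbrev Mat (d : ℕ) := Matrix (Fin d) (Fin d) ℝ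

/-- Euclidean space `ℝ^d`. -/
abbrev Euc (d : ℕ) := EuclideanSpace ℝ (Fin d)

/-- The orthogonal group `O(d)`. -/
abbrev OG (d : ℕ) := Matrix.orthogonalGroup (Fin d) ℝ

variable {d : ℕ}

/-- The action of an orthogonal matrix on Euclidean space. -/
def act (g : OG d) (x : Euc d) : Euc d := Matrix.toEuclideanLin (g : Mat d) x

lemma act_one (x : Euc d) : act (1 : OG d) x = x := by
  simp [act, Matrix.toEuclideanLin_apply, Matrix.one_mulVec]

lemma act_mul (a b : OG d) (x : Euc d) : act (a * b) x = act a (act b x) := by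
  simp [act, Matrix.toEuclideanLin_apply, Matrix.mulVec_mulVec]

lemma act_inv_of_fix {g : OG d} {x : Euc d} (h : act g x = x) : act g⁻¹ x = x := by
  conv_lhs => rw [← h, ← act_mul, inv_mul_cancel, act_one]

/-- The set of matrices underlying a subgroup `G ≤ O(d)`. -/
def matSet (G : Subgroup (OG d)) : Set (Mat d) := {m | ∃ g ∈ G, (g : Mat d) = m}

/-- The orbit `[x] = G ⬝ x`. -/
def orb (G : Subgroup (OG d)) (x : Euc d) : Set (Euc d) := {y | ∃ g ∈ G, act g x = y}

/-- The quotient metric `d([x],[y]) = inf_{g ∈ G} ‖g x − y‖`. -/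
def qdist (G : Subgroup (OG d)) (x y : Euc d) : ℝ := ⨅ g : G, ‖act (g : OG d) x - y‖

/-- The max filtering map `⟪[x],[z]⟫ = sup_{g ∈ G} ⟨g x, z⟩`. -/
def maxFilt (G : Subgroup (OG d)) (x z : Euc d) : ℝ := ⨆ g : G, ⟪act (g : OG d) x, z⟫

/-- The stabilizer `G_x = {g ∈ G : g x = x}` as a subgroup. -/
def stab (G : Subgroup (OG d)) (x : Euc d) : Subgroup (OG d) where
  carrier := {g | g ∈ G ∧ act g x = x}
  one_mem' := ⟨G.one_mem, act_one x⟩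
  mul_mem' := fun ha hb => ⟨G.mul_mem ha.1 hb.1, by rw [act_mul, hb.2, ha.2]⟩
  inv_mem' := fun ha => ⟨G.inv_mem ha.1, act_inv_of_fix ha.2⟩

/-- The Lie algebra `𝔤` of `G`: matrices whose one-parameter exponential subgroup lies in `G`. -/
def lieAlg (G : Subgroup (OG d)) : Set (Mat d) :=
  {A | ∀ t : ℝ, ∃ g ∈ G, (g : Mat d) = NormedSpace.exp (t • A)}

/-- The tangent space `T_x = 𝔤 ⬝ x` to the orbit at `x`. -/
def Tsp (G : Subgroup (OG d)) (x : Euc d) : Submodule ℝ (Euc d) :=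
  Submodule.span ℝ {v | ∃ A ∈ lieAlg G, Matrix.toEuclideanLin A x = v}

/-- The normal space `N_x = T_x^⊥`. -/
def Nsp (G : Subgroup (OG d)) (x : Euc d) : Submodule ℝ (Euc d) := (Tsp G x)ᗮ

/-- The maximal orbit dimension `max_y dim T_y`. -/
def orbDimMax (G : Subgroup (OG d)) : ℕ := ⨆ y : Euc d, Module.finrank ℝ (Tsp G y)

/-- The set of regular points `R(G)`. -/
def RG (G : Subgroup (OG d)) : Set (Euc d) :=
  {x | Module.finrank ℝ (Tsp G x) = orbDimMax G}

/-- The set of principal points `P(G)`. -/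
def PG (G : Subgroup (OG d)) : Set (Euc d) :=
  {x | ∀ z : Euc d, stab G z ≤ stab G x → stab G z = stab G x}

/-- The regular Voronoi complexity `χ(G)`. -/
def chi (G : Subgroup (OG d)) : ℕ :=
  sSup {k : ℕ | ∃ x ∈ RG G, ∃ p ∈ RG G,
    stab G p ≤ stab G x ∧ k = (stab G p).relIndex (stab G x)}

/-- The set of maximizers `{p ∈ [x] : ⟨p,z⟩ = ⟪[x],[z]⟫}`. -/
def argmaxSet (G : Subgroup (OG d)) (x z : Euc d) : Set (Euc d) :=
  {p | p ∈ orb G x ∧ ⟪p, z⟫ = maxFilt G x z}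

/-- The unique Voronoi cell `U_x`. -/
def Ucell (G : Subgroup (OG d)) (x : Euc d) : Set (Euc d) :=
  {z | argmaxSet G x z = {x}}

/-- The open Voronoi cell `V_x`, the relative (intrinsic) interior of `U_x`. -/
def Vcell (G : Subgroup (OG d)) (x : Euc d) : Set (Euc d) :=
  intrinsicInterior ℝ (Ucell G x)

/-- The open Voronoi diagram `Q_x`. -/
def Qdiag (G : Subgroup (OG d)) (x : Euc d) : Set (Euc d) :=
  ⋃ p ∈ orb G x, Vcell G p

/-- Membership `x ∈ V_z^{loc}` in the local open Voronoi cell. -/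
def VlocMem (G : Subgroup (OG d)) (z x : Euc d) : Prop :=
  ∃ U V : Set (Euc d), IsOpen U ∧ z ∈ U ∧ IsOpen V ∧ x ∈ V ∧
    ∀ q ∈ V, ∃ p₀ : Euc d,
      {p | p ∈ orb G z ∩ U ∧
        ⟪p, q⟫ = ⨆ p' : (orb G z ∩ U : Set (Euc d)), ⟪(p' : Euc d), q⟫} = {p₀}

/-- The max filter bank `Φ(x) = (⟪[x],[z_i]⟫)_{i=1}^n`. -/
def filterBank (G : Subgroup (OG d)) {n : ℕ} (z : Fin n → Euc d) (x : Euc d) :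
    EuclideanSpace ℝ (Fin n) :=
  (WithLp.equiv 2 (Fin n → ℝ)).symm fun i => maxFilt G x (z i)

/-- `Φ` is locally lower Lipschitz at `x` (with respect to the quotient metric). -/
def LocLowerLip (G : Subgroup (OG d)) {n : ℕ}
    (Φ : Euc d → EuclideanSpace ℝ (Fin n)) (x : Euc d) : Prop :=
  ∃ α > (0 : ℝ), ∃ ε > (0 : ℝ), ∀ x' y' : Euc d,
    qdist G x' x < ε → qdist G y' x < ε → α * qdist G x' y' ≤ ‖Φ x' - Φ y'‖

/-- `Φ` is bilipschitz with respect to the quotient metric. -/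
def BiLip (G : Subgroup (OG d)) {n : ℕ}
    (Φ : Euc d → EuclideanSpace ℝ (Fin n)) : Prop :=
  ∃ α > (0 : ℝ), ∃ β > (0 : ℝ), ∀ x y : Euc d,
    α * qdist G x y ≤ ‖Φ x - Φ y‖ ∧ ‖Φ x - Φ y‖ ≤ β * qdist G x y

section Aux

open scoped Matrix

variable {G : Subgroup (OG d)}

lemma act_sub (g : OG d) (x y : Euc d) : act g (x - y) = act g x - act g y := by
  simp [act, map_sub]

lemma act_smul (g : OG d) (c : ℝ) (x : Euc d) : act g (c • x) = c • act g x := by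
  simp [act, map_smul]

lemma toEuclideanLin_mul (A B : Mat d) (x : Euc d) :
    Matrix.toEuclideanLin (A * B) x = Matrix.toEuclideanLin A (Matrix.toEuclideanLin B x) := by
  simp [Matrix.toEuclideanLin_apply, Matrix.mulVec_mulVec]

lemma inner_act_act (g : OG d) (x y : Euc d) : ⟪act g x, act g y⟫ = ⟪x, y⟫ := by
  have h1 : ⟪act g x, act g y⟫ = ⟪x, Matrix.toEuclideanLin ((g : Mat d)ᴴ) (act g y)⟫ := by
    rw [Matrix.toEuclideanLin_conjTranspose_eq_adjoint]
    exact (LinearMap.adjoint_inner_right _ _ _).symm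
  rw [h1, act, ← toEuclideanLin_mul]
  have h2 : (g : Mat d)ᴴ * (g : Mat d) = 1 := by
    have := g.2.1
    simpa [Matrix.star_eq_conjTranspose] using this
  rw [h2]
  simp [Matrix.toEuclideanLin_apply, Matrix.one_mulVec]

lemma norm_act (g : OG d) (x : Euc d) : ‖act g x‖ = ‖x‖ := by
  have := inner_act_act g x x
  rw [real_inner_self_eq_norm_sq, real_inner_self_eq_norm_sq] at this
  nlinarith [norm_nonneg (act g x), norm_nonneg x]


instance : Nonempty G := ⟨⟨1, G.one_mem⟩⟩

lemma qdist_nonneg (x y : Euc d) : 0 ≤ qdist G x y :=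
  Real.iInf_nonneg fun _ => norm_nonneg _

lemma qdist_bddBelow (x y : Euc d) :
    BddBelow (Set.range fun g : G => ‖act (g : OG d) x - y‖) :=
  ⟨0, by rintro r ⟨g, rfl⟩; exact norm_nonneg _⟩

lemma qdist_le (g : G) (x y : Euc d) : qdist G x y ≤ ‖act (g : OG d) x - y‖ :=
  ciInf_le (qdist_bddBelow x y) g

lemma qdist_le_norm (x y : Euc d) : qdist G x y ≤ ‖x - y‖ := by
  have := qdist_le (G := G) ⟨1, G.one_mem⟩ x y
  simpa [act, Matrix.toEuclideanLin_apply, Matrix.one_mulVec] using this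

lemma qdist_self (x : Euc d) : qdist G x x = 0 :=
  le_antisymm (by simpa using qdist_le_norm (G := G) x x) (qdist_nonneg x x)

lemma norm_act_sub_comm (g : OG d) (x y : Euc d) : ‖act g x - y‖ = ‖act g⁻¹ y - x‖ := by
  have : act g⁻¹ (act g x - y) = x - act g⁻¹ y := by
    rw [act_sub]
    congr 1
    have : act (g⁻¹ * g) x = x := by
      rw [inv_mul_cancel]; simp [act, Matrix.toEuclideanLin_apply, Matrix.one_mulVec]
    rw [← this]
    simp [act, Matrix.toEuclideanLin_apply, Matrix.mulVec_mulVec]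
  calc ‖act g x - y‖ = ‖act g⁻¹ (act g x - y)‖ := (norm_act _ _).symm
    _ = ‖x - act g⁻¹ y‖ := by rw [this]
    _ = ‖act g⁻¹ y - x‖ := norm_sub_rev _ _

lemma qdist_comm (x y : Euc d) : qdist G x y = qdist G y x := by
  have key : ∀ a b : Euc d, qdist G a b ≤ qdist G b a := by
    intro a b
    apply le_ciInf
    intro g
    have := qdist_le (G := G) ⟨(g : OG d)⁻¹, G.inv_mem g.2⟩ a b
    calc qdist G a b ≤ ‖act (g : OG d)⁻¹ a - b‖ := this
      _ = ‖act (g : OG d) b - a‖ := by rw [norm_act_sub_comm]; simp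
  exact le_antisymm (key x y) (key y x)

lemma act_mul' (a b : OG d) (x : Euc d) : act (a * b) x = act a (act b x) := by
  simp [act, Matrix.toEuclideanLin_apply, Matrix.mulVec_mulVec]

lemma qdist_triangle (x y w : Euc d) : qdist G x w ≤ qdist G x y + qdist G y w := by
  have key : ∀ h : G, qdist G x w ≤ ‖act (h : OG d) x - y‖ + qdist G y w := by
    intro h
    have h2 : ∀ g : G, qdist G x w - ‖act (h : OG d) x - y‖ ≤ ‖act (g : OG d) y - w‖ := by
      intro g
      have hle := qdist_le (G := G) ⟨(g : OG d) * (h : OG d) * (h : OG d)⁻¹ * (h : OG d),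
        by simpa using G.mul_mem (G.mul_mem (G.mul_mem g.2 h.2) (G.inv_mem h.2)) h.2⟩ x w
      have e1 : act ((g : OG d) * (h : OG d) * (h : OG d)⁻¹ * (h : OG d)) x
          = act (g : OG d) (act (h : OG d) x) := by
        rw [mul_assoc, inv_mul_cancel, mul_one]
        exact act_mul' _ _ _
      rw [e1] at hle
      have tri : ‖act (g : OG d) (act (h : OG d) x) - w‖ ≤
          ‖act (g : OG d) (act (h : OG d) x) - act (g : OG d) y‖ + ‖act (g : OG d) y - w‖ :=
        norm_sub_le_norm_sub_add_norm_sub _ _ _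
      rw [← act_sub, norm_act] at tri
      linarith
    have := le_ciInf h2
    unfold qdist at *
    linarith
  have h3 : ∀ h : G, qdist G x w - qdist G y w ≤ ‖act (h : OG d) x - y‖ := by
    intro h; linarith [key h]
  have := le_ciInf h3
  unfold qdist at *
  linarith

lemma qdist_smul (c : ℝ) (hc : 0 ≤ c) (x y : Euc d) :
    qdist G (c • x) (c • y) = c * qdist G x y := by
  unfold qdist
  rw [Real.mul_iInf_of_nonneg hc]
  congr 1
  ext g
  rw [act_smul, ← smul_sub, norm_smul, Real.norm_eq_abs, abs_of_nonneg hc]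

lemma qdist_eq_zero_of_orb (h : y ∈ orb G x) : qdist G x y = 0 := by
  obtain ⟨g, hg, rfl⟩ := h
  refine le_antisymm ?_ (qdist_nonneg _ _)
  simpa using qdist_le (G := G) ⟨g, hg⟩ x (act g x)

lemma norm_eq_of_orb {x y : Euc d} (h : y ∈ orb G x) : ‖y‖ = ‖x‖ := by
  obtain ⟨g, hg, rfl⟩ := h
  exact norm_act g x

lemma maxFilt_bddAbove (x z : Euc d) :
    BddAbove (Set.range fun g : G => ⟪act (g : OG d) x, z⟫) := by
  refine ⟨‖x‖ * ‖z‖, ?_⟩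
  rintro r ⟨g, rfl⟩
  calc ⟪act (g : OG d) x, z⟫ ≤ ‖act (g : OG d) x‖ * ‖z‖ := real_inner_le_norm _ _
    _ = ‖x‖ * ‖z‖ := by rw [norm_act]

lemma le_maxFilt (g : G) (x z : Euc d) : ⟪act (g : OG d) x, z⟫ ≤ maxFilt G x z :=
  le_ciSup (maxFilt_bddAbove x z) g

lemma maxFilt_smul (c : ℝ) (hc : 0 ≤ c) (x z : Euc d) :
    maxFilt G (c • x) z = c * maxFilt G x z := by
  unfold maxFilt
  rw [Real.mul_iSup_of_nonneg hc]
  congr 1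
  ext g
  rw [act_smul, real_inner_smul_left]

lemma maxFilt_sub_le (x y z : Euc d) :
    maxFilt G x z - maxFilt G y z ≤ ‖z‖ * qdist G x y := by
  have key : ∀ g h : G, ⟪act (g : OG d) x, z⟫ ≤ maxFilt G y z + ‖z‖ * ‖act (h : OG d) x - y‖ := by
    intro g h
    have hmem : (g : OG d) * (h : OG d)⁻¹ ∈ G := G.mul_mem g.2 (G.inv_mem h.2)
    have e1 : act (g : OG d) x = act ((g : OG d) * (h : OG d)⁻¹) (act (h : OG d) x) := by
      rw [← act_mul', mul_assoc, inv_mul_cancel, mul_one]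
    have hin : ⟪act (g : OG d) x, z⟫ - ⟪act ((g : OG d) * (h : OG d)⁻¹) y, z⟫
        ≤ ‖z‖ * ‖act (h : OG d) x - y‖ := by
      rw [e1, ← inner_sub_left, ← act_sub]
      calc ⟪act ((g : OG d) * (h : OG d)⁻¹) (act (h : OG d) x - y), z⟫
          ≤ ‖act ((g : OG d) * (h : OG d)⁻¹) (act (h : OG d) x - y)‖ * ‖z‖ :=
            real_inner_le_norm _ _
        _ = ‖z‖ * ‖act (h : OG d) x - y‖ := by rw [norm_act, mul_comm]
    have := le_maxFilt (G := G) ⟨_, hmem⟩ y z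
    simp only at this
    linarith
  have step : ∀ h : G, maxFilt G x z ≤ maxFilt G y z + ‖z‖ * ‖act (h : OG d) x - y‖ := by
    intro h
    exact ciSup_le fun g => key g h
  have step2 : maxFilt G x z - maxFilt G y z ≤ ⨅ h : G, ‖z‖ * ‖act (h : OG d) x - y‖ := by
    apply le_ciInf
    intro h; linarith [step h]
  rw [← Real.mul_iInf_of_nonneg (norm_nonneg z)] at step2
  exact step2

lemma abs_maxFilt_sub_le (x y z : Euc d) :
    |maxFilt G x z - maxFilt G y z| ≤ ‖z‖ * qdist G x y := by
  rw [abs_le]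
  constructor
  · have := maxFilt_sub_le (G := G) y x z
    rw [qdist_comm] at this
    linarith
  · exact maxFilt_sub_le x y z

lemma euc_norm_le_sum {n : ℕ} (v : EuclideanSpace ℝ (Fin n)) : ‖v‖ ≤ ∑ i, ‖v i‖ := by
  rw [EuclideanSpace.norm_eq]
  have h1 : ∑ i, ‖v i‖ ^ 2 ≤ (∑ i, ‖v i‖) ^ 2 :=
    Finset.sum_sq_le_sq_sum_of_nonneg fun i _ => norm_nonneg _
  calc Real.sqrt (∑ i, ‖v i‖ ^ 2) ≤ Real.sqrt ((∑ i, ‖v i‖) ^ 2) := Real.sqrt_le_sqrt h1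
    _ = ∑ i, ‖v i‖ := Real.sqrt_sq (Finset.sum_nonneg fun i _ => norm_nonneg _)

lemma filterBank_sub_norm_le {n : ℕ} (z : Fin n → Euc d) (x y : Euc d) :
    ‖filterBank G z x - filterBank G z y‖ ≤ (∑ i, ‖z i‖) * qdist G x y := by
  calc ‖filterBank G z x - filterBank G z y‖
      ≤ ∑ i, ‖(filterBank G z x - filterBank G z y) i‖ := euc_norm_le_sum _
    _ ≤ ∑ i, ‖z i‖ * qdist G x y := by
        apply Finset.sum_le_sum
        intro i _
        have : (filterBank G z x - filterBank G z y) i = maxFilt G x (z i) - maxFilt G y (z i) :=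
          rfl
        rw [this, Real.norm_eq_abs]
        exact abs_maxFilt_sub_le x y (z i)
    _ = (∑ i, ‖z i‖) * qdist G x y := by rw [Finset.sum_mul]

lemma filterBank_lipschitz {n : ℕ} (z : Fin n → Euc d) :
    Continuous (filterBank G z) := by
  rw [Metric.continuous_iff]
  intro x ε hε
  rcases eq_or_lt_of_le (Finset.sum_nonneg fun i (_ : i ∈ Finset.univ) => norm_nonneg (z i))
    with hB | hB
  · refine ⟨1, one_pos, fun y _ => ?_⟩
    have h := filterBank_sub_norm_le (G := G) z y x
    rw [← hB, zero_mul] at h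
    rw [dist_eq_norm]
    have := qdist_nonneg (G := G) y x
    linarith
  · refine ⟨ε / (∑ i, ‖z i‖), div_pos hε hB, fun y hy => ?_⟩
    have h := filterBank_sub_norm_le (G := G) z y x
    have h2 : qdist G y x ≤ ‖y - x‖ := qdist_le_norm y x
    rw [dist_eq_norm] at hy ⊢
    have h3 : (∑ i, ‖z i‖) * qdist G y x ≤ (∑ i, ‖z i‖) * ‖y - x‖ :=
      mul_le_mul_of_nonneg_left h2 hB.le
    have h4 : (∑ i, ‖z i‖) * ‖y - x‖ < (∑ i, ‖z i‖) * (ε / (∑ i, ‖z i‖)) :=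
      mul_lt_mul_of_pos_left hy hB
    have h5 : (∑ i, ‖z i‖) * (ε / (∑ i, ‖z i‖)) = ε := by field_simp
    linarith

lemma filterBank_smul {n : ℕ} (z : Fin n → Euc d) (c : ℝ) (hc : 0 ≤ c) (x : Euc d) :
    filterBank G z (c • x) = c • filterBank G z x := by
  unfold filterBank
  ext i
  simp only [WithLp.equiv_symm_apply, PiLp.toLp_apply, PiLp.smul_apply]
  rw [maxFilt_smul c hc]
  rfl


end Aux

/-- An injective max filter bank which is locally lower Lipschitz at every
unit-norm point is bilipschitz. -/
theorem biLip_of_injective_and_locLowerLip_on_sphere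
    (d n : ℕ) (G : Subgroup (OG d)) (hGclosed : IsClosed (matSet G)) (z : Fin n → Euc d)
    (hinj : ∀ x y : Euc d, filterBank G z x = filterBank G z y → orb G x = orb G y)
    (hllip : ∀ x : Euc d, ‖x‖ = 1 → LocLowerLip G (filterBank G z) x) :
    BiLip G (filterBank G z) := by
  set Φ := filterBank G z with hΦ
  have hΦcont : Continuous Φ := filterBank_lipschitz z
  set B : ℝ := ∑ i, ‖z i‖ with hB
  have hB0 : 0 ≤ B := Finset.sum_nonneg fun i _ => norm_nonneg _
  -- the compact set S
  set S : Set (Euc d × Euc d) := {p | ‖p.1‖ ⊔ ‖p.2‖ = 1} with hS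
  have hScl : IsClosed S := by
    have : Continuous fun p : Euc d × Euc d => ‖p.1‖ ⊔ ‖p.2‖ :=
      (continuous_fst.norm).max (continuous_snd.norm)
    exact isClosed_eq this continuous_const
  have hScomp : IsCompact S := by
    refine IsCompact.of_isClosed_subset
      ((isCompact_closedBall (0 : Euc d) 1).prod (isCompact_closedBall (0 : Euc d) 1)) hScl ?_
    rintro ⟨a, b⟩ hab
    simp only [hS, Set.mem_setOf_eq] at hab
    constructor
    · simp only [Metric.mem_closedBall, dist_zero_right]
      exact le_trans (le_max_left _ _) hab.le
    · simp only [Metric.mem_closedBall, dist_zero_right]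
      exact le_trans (le_max_right _ _) hab.le
  -- lower bound on S
  have claim : ∃ α > (0:ℝ), ∀ p ∈ S, α * qdist G p.1 p.2 ≤ ‖Φ p.1 - Φ p.2‖ := by
    by_contra hc
    push_neg at hc
    have hu : ∀ k : ℕ, ∃ p : Euc d × Euc d, p ∈ S ∧
        ‖Φ p.1 - Φ p.2‖ < (1 / ((k : ℝ) + 1)) * qdist G p.1 p.2 := by
      intro k
      obtain ⟨p, hpS, hp⟩ := hc (1 / ((k : ℝ) + 1)) (by positivity)
      exact ⟨p, hpS, hp⟩
    choose u huS hult using hu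
    obtain ⟨p, hpS, φ, hφ, hconv⟩ := hScomp.tendsto_subseq huS
    have h1 : Filter.Tendsto (fun k => (u (φ k)).1) Filter.atTop (nhds p.1) :=
      (continuous_fst.tendsto p).comp hconv
    have h2 : Filter.Tendsto (fun k => (u (φ k)).2) Filter.atTop (nhds p.2) :=
      (continuous_snd.tendsto p).comp hconv
    -- the norms tend to ‖Φ p.1 - Φ p.2‖
    have hA : Filter.Tendsto (fun k => ‖Φ (u (φ k)).1 - Φ (u (φ k)).2‖)
        Filter.atTop (nhds ‖Φ p.1 - Φ p.2‖) :=
      ((((hΦcont.tendsto p.1).comp h1).sub ((hΦcont.tendsto p.2).comp h2)).norm)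
    have hbd : ∀ k : ℕ, ‖Φ (u (φ k)).1 - Φ (u (φ k)).2‖ ≤ 2 / ((k : ℝ) + 1) := by
      intro k
      have hq2 : qdist G (u (φ k)).1 (u (φ k)).2 ≤ 2 := by
        have := qdist_le_norm (G := G) (u (φ k)).1 (u (φ k)).2
        have hS1 := huS (φ k)
        simp only [hS, Set.mem_setOf_eq] at hS1
        have n1 : ‖(u (φ k)).1‖ ≤ 1 := le_trans (le_max_left _ _) hS1.le
        have n2 : ‖(u (φ k)).2‖ ≤ 1 := le_trans (le_max_right _ _) hS1.le
        have := norm_sub_le (u (φ k)).1 (u (φ k)).2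
        linarith [qdist_le_norm (G := G) (u (φ k)).1 (u (φ k)).2]
      have hlt := hult (φ k)
      have hkφ : (k : ℝ) ≤ (φ k : ℝ) := by exact_mod_cast hφ.le_apply
      have hmono : (1 : ℝ) / ((φ k : ℝ) + 1) ≤ 1 / ((k : ℝ) + 1) :=
        one_div_le_one_div_of_le (by positivity) (by linarith)
      have hqn : 0 ≤ qdist G (u (φ k)).1 (u (φ k)).2 := qdist_nonneg _ _
      calc ‖Φ (u (φ k)).1 - Φ (u (φ k)).2‖
          ≤ (1 / ((φ k : ℝ) + 1)) * qdist G (u (φ k)).1 (u (φ k)).2 := (hlt).le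
        _ ≤ (1 / ((k : ℝ) + 1)) * 2 := by
            apply mul_le_mul hmono hq2 hqn (by positivity)
        _ = 2 / ((k : ℝ) + 1) := by ring
    have hzero : Filter.Tendsto (fun k : ℕ => 2 / ((k : ℝ) + 1)) Filter.atTop (nhds 0) := by
      have := tendsto_one_div_add_atTop_nhds_zero_nat (𝕜 := ℝ)
      have h2' := this.const_mul (2 : ℝ)
      simpa [mul_one_div, div_eq_mul_inv] using h2'
    have hle0 : ‖Φ p.1 - Φ p.2‖ ≤ 0 :=
      le_of_tendsto_of_tendsto' hA hzero hbd
    have hΦeq : Φ p.1 = Φ p.2 := by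
      rw [← sub_eq_zero]
      exact norm_le_zero_iff.mp hle0
    have horb : orb G p.1 = orb G p.2 := hinj _ _ hΦeq
    have hmem : p.2 ∈ orb G p.1 := by
      rw [horb]; exact ⟨1, G.one_mem, by simp [act, Matrix.toEuclideanLin_apply, Matrix.one_mulVec]⟩
    have hq0 : qdist G p.1 p.2 = 0 := qdist_eq_zero_of_orb hmem
    have hnormeq : ‖p.2‖ = ‖p.1‖ := norm_eq_of_orb hmem
    have hp1 : ‖p.1‖ = 1 := by
      have := hpS
      simp only [hS, Set.mem_setOf_eq, hnormeq, max_self] at this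
      exact this
    obtain ⟨α, hα, ε, hε, hloc⟩ := hllip p.1 hp1
    -- eventual facts
    have e1 : ∀ᶠ k in Filter.atTop, dist ((u (φ k)).1) p.1 < ε := by
      have := h1 (Metric.ball_mem_nhds p.1 hε)
      simpa [Metric.mem_ball] using this
    have e2 : ∀ᶠ k in Filter.atTop, dist ((u (φ k)).2) p.2 < ε := by
      have := h2 (Metric.ball_mem_nhds p.2 hε)
      simpa [Metric.mem_ball] using this
    have hφtop : Filter.Tendsto φ Filter.atTop Filter.atTop := hφ.tendsto_atTop
    have e3 : ∀ᶠ k in Filter.atTop, (1 : ℝ) / ((φ k : ℝ) + 1) < α := by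
      have hten : Filter.Tendsto (fun k : ℕ => (1 : ℝ) / ((φ k : ℝ) + 1))
          Filter.atTop (nhds 0) :=
        tendsto_one_div_add_atTop_nhds_zero_nat.comp hφtop
      exact hten.eventually_lt_const hα
    obtain ⟨k, hk1, hk2, hk3⟩ := (e1.and (e2.and e3)).exists
    set xk := (u (φ k)).1
    set yk := (u (φ k)).2
    have hqx : qdist G xk p.1 < ε := by
      have := qdist_le_norm (G := G) xk p.1
      rw [dist_eq_norm] at hk1
      linarith
    have hqy : qdist G yk p.1 < ε := by
      have t1 := qdist_triangle (G := G) yk p.2 p.1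
      have t2 : qdist G p.2 p.1 = 0 := by rw [qdist_comm]; exact hq0
      have t3 := qdist_le_norm (G := G) yk p.2
      rw [dist_eq_norm] at hk2
      linarith
    have hlb := hloc xk yk hqx hqy
    have hub := hult (φ k)
    have hqpos : 0 < qdist G xk yk := by
      by_contra hq
      push_neg at hq
      have : qdist G xk yk = 0 := le_antisymm hq (qdist_nonneg _ _)
      rw [this, mul_zero] at hub
      exact absurd hub (not_lt.mpr (norm_nonneg _))
    nlinarith [hlb, hub, hk3, hqpos]
  obtain ⟨α, hα, hlow⟩ := claim
  refine ⟨α, hα, B + 1, by linarith, fun x y => ?_⟩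
  constructor
  · -- lower bound, by homogeneity
    rcases eq_or_lt_of_le (le_max_iff.mpr (Or.inl (norm_nonneg x)) :
        (0:ℝ) ≤ ‖x‖ ⊔ ‖y‖) with hc | hc
    · -- both zero
      have hx : ‖x‖ = 0 := le_antisymm (le_trans (le_max_left _ _) hc.ge) (norm_nonneg _)
      have hy : ‖y‖ = 0 := le_antisymm (le_trans (le_max_right _ _) hc.ge) (norm_nonneg _)
      have hx0 : x = 0 := norm_eq_zero.mp hx
      have hy0 : y = 0 := norm_eq_zero.mp hy
      subst hx0; subst hy0
      rw [qdist_self, mul_zero, sub_self]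
      simp
    · set c : ℝ := ‖x‖ ⊔ ‖y‖ with hcdef
      have hcpos : 0 < c := hc
      have hmemS : ((c⁻¹ • x, c⁻¹ • y) : Euc d × Euc d) ∈ S := by
        simp only [hS, Set.mem_setOf_eq]
        have : ‖c⁻¹ • x‖ ⊔ ‖c⁻¹ • y‖ = c⁻¹ * (‖x‖ ⊔ ‖y‖) := by
          rw [norm_smul, norm_smul, Real.norm_eq_abs, abs_of_pos (inv_pos.mpr hcpos)]
          exact (mul_max_of_nonneg _ _ (inv_pos.mpr hcpos).le).symm
        rw [this, ← hcdef, inv_mul_cancel₀ hcpos.ne']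
      have hkey := hlow _ hmemS
      simp only at hkey
      rw [hΦ] at hkey ⊢
      rw [qdist_smul _ (inv_pos.mpr hcpos).le, filterBank_smul z _ (inv_pos.mpr hcpos).le,
        filterBank_smul z _ (inv_pos.mpr hcpos).le, ← smul_sub, norm_smul,
        Real.norm_eq_abs, abs_of_pos (inv_pos.mpr hcpos)] at hkey
    -- hkey : α * (c⁻¹ * qdist G x y) ≤ c⁻¹ * ‖Φ x - Φ y‖
      have h5 := mul_le_mul_of_nonneg_left hkey hcpos.le
      have e1 : c * (α * (c⁻¹ * qdist G x y)) = (c * c⁻¹) * (α * qdist G x y) := by ring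
      have e2 : c * (c⁻¹ * ‖filterBank G z x - filterBank G z y‖)
          = (c * c⁻¹) * ‖filterBank G z x - filterBank G z y‖ := by ring
      rw [e1, e2, mul_inv_cancel₀ hcpos.ne', one_mul, one_mul] at h5
      exact h5
  · -- upper bound
    have h := filterBank_sub_norm_le (G := G) z x y
    have := qdist_nonneg (G := G) x y
    rw [← hΦ] at h
    nlinarith


end
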